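/- arXiv:1907.07615 — 4 statements merged into one kernel-verified Lean document; each statement's English description precedes it below -/
import Mathlib

section
/- Define R_n(x) = P_n(x) + (2(2n+3))/((n+2)^2 (2+(n+1)(n+3))) · P_{n+1}(x) − ((n+1)^2 (2+n(n+2)))/((n+2)^2 (2+(n+1)(n+3))) · P_{n+2}(x). Then for every natural number n, R_n'(-1) = R_n(-1) and R_n'(1) = 0. -/
open Polynomial intervalIntegral Filter

/-- Legendre polynomial of degree `n` on `[-1,1]`, normalized so `P n 1 = 1`
(Rodrigues' formula). -/
noncomputable def legendrePoly (n : ℕ) : Polynomial ℝ :=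
  C ((2 ^ n * n.factorial : ℝ))⁻¹ * derivative^[n] ((X ^ 2 - 1) ^ n)

/-- Pointwise Legendre polynomial. -/
noncomputable def P (n : ℕ) (x : ℝ) : ℝ := (legendrePoly n).eval x

/-- First derivative of the Legendre polynomial. -/
noncomputable def P' (n : ℕ) (x : ℝ) : ℝ := ((legendrePoly n).derivative).eval x

/-- Second derivative of the Legendre polynomial. -/
noncomputable def P'' (n : ℕ) (x : ℝ) : ℝ := ((legendrePoly n).derivative.derivative).eval x

lemma hsplit (n : ℕ) : ((X:ℝ[X])^2 - 1)^n = (X - 1)^n * (X + 1)^n := by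
  rw [← mul_pow]; ring_nf

lemma eval_iter (n m : ℕ) (x : ℝ) :
    (derivative^[m] (((X:ℝ[X])^2-1)^n)).eval x =
      ∑ k ∈ Finset.range (m+1), (m.choose k : ℝ) *
        ((n.descFactorial (m-k) : ℝ) * (x-1)^(n-(m-k)) *
          ((n.descFactorial k : ℝ) * (x+1)^(n-k))) := by
  have h1 : (X - 1 : ℝ[X]) = X - C 1 := by simp
  have h2 : (X + 1 : ℝ[X]) = X - C (-1) := by simp [sub_neg_eq_add]
  rw [hsplit, h1, h2, Polynomial.iterate_derivative_mul, eval_finset_sum]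
  refine Finset.sum_congr rfl fun k _ => ?_
  rw [Polynomial.iterate_derivative_X_sub_pow, Polynomial.iterate_derivative_X_sub_pow]
  simp only [smul_mul_smul_comm, eval_smul, smul_eq_mul, eval_mul, eval_pow, eval_sub, eval_X,
    eval_C, Nat.cast_mul]
  ring

lemma eval_at_one (n : ℕ) :
    (derivative^[n] (((X:ℝ[X])^2-1)^n)).eval 1 = (2:ℝ)^n * (n.factorial:ℝ) := by
  rw [eval_iter, Finset.sum_eq_single 0]
  · simp [Nat.descFactorial_self]; ring
  · intro k hk hk0
    rw [Nat.sub_sub_self (by simpa using Nat.lt_succ_iff.mp (Finset.mem_range.mp hk))]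
    simp [show (1:ℝ)-1 = 0 by ring, zero_pow hk0]
  · simp

lemma eval_at_one' (n : ℕ) :
    (derivative^[n+1] (((X:ℝ[X])^2-1)^n)).eval 1 =
      ((n:ℝ)+1) * (n.factorial:ℝ) * (n:ℝ) * (2:ℝ)^(n-1) := by
  rw [eval_iter, Finset.sum_eq_single 1]
  · simp [Nat.sub_sub_self, Nat.descFactorial_self]
    ring
  · intro k hk hk1
    have hk' : k ≤ n + 1 := Nat.lt_succ_iff.mp (Finset.mem_range.mp hk)
    rcases Nat.eq_or_lt_of_le hk' with h | h
    · subst h; simp [Nat.descFactorial_eq_zero_iff_lt]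
    · rcases Nat.eq_zero_or_pos k with rfl | hk0
      · simp [Nat.descFactorial_eq_zero_iff_lt]
      · have : (0:ℝ) ^ (n - (n+1-k)) = 0 := zero_pow (by omega)
        simp [show (1:ℝ)-1 = 0 by ring, this]
  · simp

lemma eval_at_negone (n : ℕ) :
    (derivative^[n] (((X:ℝ[X])^2-1)^n)).eval (-1) = (-2:ℝ)^n * (n.factorial:ℝ) := by
  rw [eval_iter, Finset.sum_eq_single n]
  · simp [Nat.descFactorial_self, show (-1:ℝ)-1 = -2 by ring]
  · intro k hk hkn
    have : k < n := by
      have := Nat.lt_succ_iff.mp (Finset.mem_range.mp hk); omega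
    simp [show (-1:ℝ)+1 = 0 by ring, zero_pow (by omega : n - k ≠ 0)]
  · intro h; simp at h

lemma eval_at_negone' (n : ℕ) :
    (derivative^[n+1] (((X:ℝ[X])^2-1)^n)).eval (-1) =
      ((n:ℝ)+1) * (n.factorial:ℝ) * (n:ℝ) * (-2:ℝ)^(n-1) := by
  rw [eval_iter, Finset.sum_eq_single n]
  · simp [Nat.descFactorial_self, show (-1:ℝ)-1 = -2 by ring,
      show n+1-n = 1 by omega]
    ring
  · intro k hk hkn
    have hk' : k ≤ n + 1 := Nat.lt_succ_iff.mp (Finset.mem_range.mp hk)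
    rcases Nat.eq_or_lt_of_le hk' with h | h
    · subst h; simp [Nat.descFactorial_eq_zero_iff_lt]
    · have : k < n := by omega
      simp [show (-1:ℝ)+1 = 0 by ring, zero_pow (by omega : n - k ≠ 0)]
  · intro h; simp at h

lemma fac_ne (n : ℕ) : (2:ℝ)^n * (n.factorial:ℝ) ≠ 0 := by
  positivity

lemma P_eval (n : ℕ) (x : ℝ) :
    P n x = ((2 ^ n * n.factorial : ℝ))⁻¹ * (derivative^[n] (((X:ℝ[X])^2-1)^n)).eval x := by
  simp [P, legendrePoly]

lemma P'_eval (n : ℕ) (x : ℝ) :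
    P' n x = ((2 ^ n * n.factorial : ℝ))⁻¹ *
      (derivative^[n+1] (((X:ℝ[X])^2-1)^n)).eval x := by
  simp [P', legendrePoly, derivative_C_mul, Function.iterate_succ_apply']

lemma P_one (n : ℕ) : P n 1 = 1 := by
  rw [P_eval, eval_at_one]
  field_simp

lemma P_negone (n : ℕ) : P n (-1) = (-1:ℝ)^n := by
  rw [P_eval, eval_at_negone, show (-2:ℝ) = (-1) * 2 by ring, mul_pow]
  have := fac_ne n
  field_simp

lemma P'_one (n : ℕ) : P' n 1 = (n:ℝ) * (n+1) / 2 := by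
  rw [P'_eval, eval_at_one']
  cases n with
  | zero => simp
  | succ m =>
    have h2 : (2:ℝ)^(m+1) = 2 * 2^m := by ring
    simp only [show m + 1 - 1 = m from rfl, Nat.factorial_succ, Nat.cast_mul, Nat.cast_add,
      Nat.cast_one, h2]
    have hf : (m.factorial : ℝ) ≠ 0 := by positivity
    have h2m : (2:ℝ)^m ≠ 0 := by positivity
    field_simp

lemma P'_negone (n : ℕ) : P' n (-1) = (-1:ℝ)^(n+1) * ((n:ℝ) * (n+1) / 2) := by
  rw [P'_eval, eval_at_negone']
  cases n with
  | zero => simp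
  | succ m =>
    have h2 : (2:ℝ)^(m+1) = 2 * 2^m := by ring
    have hneg : (-2:ℝ)^(m+1-1) = (-1)^m * 2^m := by
      rw [show m+1-1 = m from rfl, show (-2:ℝ) = (-1)*2 by ring, mul_pow]
    simp only [Nat.factorial_succ, Nat.cast_mul, Nat.cast_add, Nat.cast_one, h2, hneg]
    have hf : (m.factorial : ℝ) ≠ 0 := by positivity
    have h2m : (2:ℝ)^m ≠ 0 := by positivity
    rw [pow_succ, pow_succ]
    field_simp

theorem robin_neumann_basis_boundary (n : ℕ) :
    (P' n (-1) + 2 * (2 * n + 3) / ((n + 2 : ℝ) ^ 2 * (2 + (n + 1) * (n + 3))) * P' (n + 1) (-1)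
        - ((n + 1 : ℝ) ^ 2 * (2 + n * (n + 2))) / ((n + 2 : ℝ) ^ 2 * (2 + (n + 1) * (n + 3)))
          * P' (n + 2) (-1)
      = P n (-1) + 2 * (2 * n + 3) / ((n + 2 : ℝ) ^ 2 * (2 + (n + 1) * (n + 3))) * P (n + 1) (-1)
        - ((n + 1 : ℝ) ^ 2 * (2 + n * (n + 2))) / ((n + 2 : ℝ) ^ 2 * (2 + (n + 1) * (n + 3)))
          * P (n + 2) (-1)) ∧
    (P' n 1 + 2 * (2 * n + 3) / ((n + 2 : ℝ) ^ 2 * (2 + (n + 1) * (n + 3))) * P' (n + 1) 1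
        - ((n + 1 : ℝ) ^ 2 * (2 + n * (n + 2))) / ((n + 2 : ℝ) ^ 2 * (2 + (n + 1) * (n + 3)))
          * P' (n + 2) 1 = 0) := by
  have hd : ((n + 2 : ℝ) ^ 2 * (2 + (n + 1) * (n + 3))) ≠ 0 := by positivity
  constructor
  · rw [P'_negone, P'_negone, P'_negone, P_negone, P_negone, P_negone]
    push_cast
    rw [show n+1+1 = n+2 from rfl, show n+2+1 = n+3 from rfl,
      pow_succ, pow_succ, pow_succ, pow_succ, pow_succ]
    field_simp
    ring
  · rw [P'_one, P'_one, P'_one]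
    push_cast
    field_simp
    ring
end

section
/- For 0 < γ < 1 and every natural number m, ∫_{-1}^1 P_m(x) (1+x)^{-γ} dx = (-1)^m · 2^{1-γ} · (γ)_m / (1-γ)_{m+1}, where (t)_ℓ denotes the Pochhammer symbol (rising factorial) and P_m is the Legendre polynomial of degree m. -/
open Polynomial intervalIntegral Filter

open Finset


lemma asc_eval_prod (n : ℕ) (x : ℝ) :
    (ascPochhammer ℝ n).eval x = ∏ i ∈ Finset.range n, (x + i) := by
  induction n with
  | zero => simp
  | succ n ih => rw [ascPochhammer_succ_eval, ih, Finset.prod_range_succ]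

lemma iter_deriv_comp_X_add_one (p : ℝ[X]) (k : ℕ) :
    derivative^[k] (p.comp (X + C 1)) = (derivative^[k] p).comp (X + C 1) := by
  induction k with
  | zero => rfl
  | succ k ih =>
      rw [Function.iterate_succ_apply', ih, Function.iterate_succ_apply', derivative_comp]
      simp

lemma prod_erase_eval (m k : ℕ) (hk : k < m + 1) :
    ∏ i ∈ (Finset.range (m+1)).erase k, ((i:ℝ) - (k:ℝ))
      = (-1)^k * k.factorial * (m-k).factorial := by
  have hsplit : (Finset.range (m+1)).erase k = Finset.range k ∪ Finset.Ico (k+1) (m+1) := by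
    ext i
    simp only [Finset.mem_erase, Finset.mem_range, Finset.mem_union, Finset.mem_Ico]
    omega
  have hdisj : Disjoint (Finset.range k) (Finset.Ico (k+1) (m+1)) := by
    simp only [Finset.disjoint_left, Finset.mem_range, Finset.mem_Ico]
    omega
  rw [hsplit, Finset.prod_union hdisj]
  have h1 : ∏ i ∈ Finset.range k, ((i:ℝ) - (k:ℝ)) = (-1)^k * k.factorial := by
    have : ∀ i ∈ Finset.range k, ((i:ℝ) - (k:ℝ)) = (-1) * ((k:ℝ) - (i:ℝ)) := by
      intro i _; ring
    rw [Finset.prod_congr rfl this, Finset.prod_mul_distrib, Finset.prod_const,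
      Finset.card_range]
    congr 1
    have h' : ∀ i ∈ Finset.range k, ((k:ℝ) - (i:ℝ)) = ((k - i : ℕ) : ℝ) := by
      intro i hi
      rw [Nat.cast_sub (le_of_lt (Finset.mem_range.mp hi))]
    rw [Finset.prod_congr rfl h', ← Nat.cast_prod, ← Nat.descFactorial_eq_prod_range,
      Nat.descFactorial_self]
  have h2 : ∏ i ∈ Finset.Ico (k+1) (m+1), ((i:ℝ) - (k:ℝ)) = (m-k).factorial := by
    rw [Finset.prod_Ico_eq_prod_range]
    have hmk : m + 1 - (k + 1) = m - k := by omega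
    rw [hmk]
    have : ∀ i ∈ Finset.range (m-k), (((k+1+i : ℕ):ℝ) - (k:ℝ)) = ((i+1 : ℕ) : ℝ) := by
      intro i _; push_cast; ring
    rw [Finset.prod_congr rfl this, ← Nat.cast_prod,
      Finset.prod_range_add_one_eq_factorial]
  · rw [h1, h2]

lemma nat_key (m k : ℕ) (hk : k ≤ m) :
    m.choose k * ((m+k).choose m) * (k.factorial * (m-k).factorial)
      = (k+1).ascFactorial m := by
  apply Nat.eq_of_mul_eq_mul_right (Nat.factorial_pos k)
  have h1 : m.choose k * k.factorial * (m-k).factorial = m.factorial :=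
    Nat.choose_mul_factorial_mul_factorial hk
  have h2 : (m+k).choose m * m.factorial * k.factorial = (m+k).factorial := by
    have := Nat.choose_mul_factorial_mul_factorial (Nat.le_add_right m k)
    simpa using this
  have h3 : k.factorial * (k+1).ascFactorial m = (k+m).factorial :=
    Nat.factorial_mul_ascFactorial k m
  calc m.choose k * ((m+k).choose m) * (k.factorial * (m-k).factorial) * k.factorial
      = (m+k).choose m * (m.choose k * k.factorial * (m-k).factorial) * k.factorial := by ring
    _ = (m+k).choose m * m.factorial * k.factorial := by rw [h1]
    _ = (m+k).factorial := h2
    _ = (k+m).factorial := by rw [Nat.add_comm]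
    _ = (k+1).ascFactorial m * k.factorial := by rw [← h3, Nat.mul_comm]

lemma poly_identity (m : ℕ) :
    (∑ j ∈ Finset.range (m+1),
      C ((-1:ℝ)^(m-j) * (m.choose j) * ((m+j).choose m)) *
        ∏ i ∈ (Finset.range (m+1)).erase j, (C ((i:ℝ)+1) - X))
    = C ((-1:ℝ)^m) * ascPochhammer ℝ m := by
  set Q : ℝ[X] := ∑ j ∈ Finset.range (m+1),
      C ((-1:ℝ)^(m-j) * (m.choose j) * ((m+j).choose m)) *
        ∏ i ∈ (Finset.range (m+1)).erase j, (C ((i:ℝ)+1) - X) with hQ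
  set R : ℝ[X] := C ((-1:ℝ)^m) * ascPochhammer ℝ m with hR
  have hQdeg : Q.natDegree ≤ m := by
    refine le_trans (Polynomial.natDegree_sum_le _ _) ?_
    rw [Finset.fold_max_le]
    refine ⟨Nat.zero_le m, ?_⟩
    intro j hj
    refine le_trans (Polynomial.natDegree_mul_le) ?_
    rw [Polynomial.natDegree_C, Nat.zero_add]
    refine le_trans (Polynomial.natDegree_prod_le _ _) ?_
    refine le_trans (Finset.sum_le_card_nsmul _ _ 1 ?_) ?_
    · intro i _
      have : (C ((i:ℝ)+1) - X) = -(X - C ((i:ℝ)+1)) := by ring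
      rw [this, Polynomial.natDegree_neg, Polynomial.natDegree_X_sub_C]
    · rw [smul_eq_mul, mul_one, Finset.card_erase_of_mem (Finset.mem_range.mp hj |> fun h => Finset.mem_range.mpr h)]
      simp
  have hRdeg : R.natDegree ≤ m := by
    refine le_trans (Polynomial.natDegree_mul_le) ?_
    rw [Polynomial.natDegree_C, Nat.zero_add, ascPochhammer_natDegree]
  have heval : ∀ k ∈ Finset.range (m+1), Q.eval ((k:ℝ)+1) = R.eval ((k:ℝ)+1) := by
    intro k hk
    have hkm : k < m + 1 := Finset.mem_range.mp hk
    have hQe : Q.eval ((k:ℝ)+1)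
        = ((-1:ℝ)^(m-k) * (m.choose k) * ((m+k).choose m)) *
            ∏ i ∈ (Finset.range (m+1)).erase k, ((i:ℝ) - (k:ℝ)) := by
      rw [hQ, Polynomial.eval_finset_sum]
      rw [Finset.sum_eq_single_of_mem k hk]
      · rw [Polynomial.eval_mul, Polynomial.eval_C, Polynomial.eval_prod]
        congr 1
        refine Finset.prod_congr rfl ?_
        intro i _
        simp
      · intro j hj hjk
        rw [Polynomial.eval_mul, Polynomial.eval_prod]
        have hzero : ∃ i ∈ (Finset.range (m+1)).erase j,
            Polynomial.eval ((k:ℝ)+1) (C ((i:ℝ)+1) - X) = 0 := by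
          refine ⟨k, Finset.mem_erase.mpr ⟨fun h => hjk h.symm, hk⟩, ?_⟩
          simp
        obtain ⟨i, hi, hiz⟩ := hzero
        rw [Finset.prod_eq_zero hi hiz, mul_zero]
    have hRe : R.eval ((k:ℝ)+1) = (-1:ℝ)^m * ((k+1).ascFactorial m : ℝ) := by
      rw [hR, Polynomial.eval_mul, Polynomial.eval_C]
      congr 1
      have h := ascPochhammer_eval_cast (S := ℝ) m (k+1)
      rw [ascPochhammer_nat_eq_ascFactorial] at h
      push_cast at h
      exact h.symm
    rw [hQe, hRe, prod_erase_eval m k hkm]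
    have hsign : (-1:ℝ)^(m-k) * (-1:ℝ)^k = (-1:ℝ)^m := by
      rw [← pow_add]
      congr 1
      omega
    have hnat := nat_key m k (by omega)
    calc (-1:ℝ)^(m-k) * (m.choose k) * ((m+k).choose m) *
          ((-1)^k * k.factorial * (m-k).factorial)
        = ((-1:ℝ)^(m-k) * (-1)^k) *
            ((m.choose k : ℝ) * ((m+k).choose m) * ((k.factorial : ℝ) * (m-k).factorial)) := by
          ring
      _ = (-1:ℝ)^m * ((k+1).ascFactorial m : ℝ) := by
          rw [hsign]
          congr 1
          rw [← hnat]
          push_cast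
          ring
  have hsub : Q - R = 0 := by
    apply Polynomial.eq_zero_of_natDegree_lt_card_of_eval_eq_zero' (Q - R)
      ((Finset.range (m+1)).image (fun k : ℕ => (k:ℝ)+1))
    · intro y hy
      obtain ⟨k, hk, rfl⟩ := Finset.mem_image.mp hy
      rw [Polynomial.eval_sub, heval k hk, sub_self]
    · have hinj : Function.Injective (fun k : ℕ => (k:ℝ)+1) := by
        intro a b h
        simp only [add_left_inj] at h
        exact_mod_cast h
      rw [Finset.card_image_of_injective _ hinj, Finset.card_range]
      have hd : (Q - R).natDegree ≤ m :=
        le_trans (Polynomial.natDegree_sub_le _ _) (max_le hQdeg hRdeg)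
      omega
  have := sub_eq_zero.mp hsub
  exact this

lemma key_identity (m : ℕ) (γ : ℝ) (hγ1 : γ < 1) :
    ∑ j ∈ Finset.range (m+1),
      ((-1:ℝ)^(m-j) * (m.choose j) * ((m+j).choose m)) / ((j:ℝ)+1-γ)
    = (-1:ℝ)^m * (ascPochhammer ℝ m).eval γ / (ascPochhammer ℝ (m+1)).eval (1-γ) := by
  have hpos : ∀ j : ℕ, (0:ℝ) < (j:ℝ)+1-γ := by
    intro j
    have : (0:ℝ) ≤ (j:ℝ) := Nat.cast_nonneg j
    linarith
  have hB : (ascPochhammer ℝ (m+1)).eval (1-γ)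
      = ∏ i ∈ Finset.range (m+1), ((i:ℝ)+1-γ) := by
    rw [asc_eval_prod]
    exact Finset.prod_congr rfl (fun i _ => by ring)
  have hBne : (ascPochhammer ℝ (m+1)).eval (1-γ) ≠ 0 := by
    rw [hB]
    exact Finset.prod_ne_zero_iff.mpr (fun i _ => ne_of_gt (hpos i))
  have hQR := congrArg (Polynomial.eval γ) (poly_identity m)
  rw [Polynomial.eval_finset_sum, Polynomial.eval_mul, Polynomial.eval_C] at hQR
  simp only [Polynomial.eval_mul, Polynomial.eval_C, Polynomial.eval_prod,
    Polynomial.eval_sub, Polynomial.eval_add, Polynomial.eval_X, Polynomial.eval_one] at hQR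
  -- hQR : ∑ j, e j * ∏ i ∈ erase, (i+1-γ) = (-1)^m * eval γ (asc m)
  have hterm : ∀ j ∈ Finset.range (m+1),
      ((-1:ℝ)^(m-j) * (m.choose j) * ((m+j).choose m)) / ((j:ℝ)+1-γ)
      = ((-1:ℝ)^(m-j) * (m.choose j) * ((m+j).choose m)) *
          (∏ i ∈ (Finset.range (m+1)).erase j, ((i:ℝ)+1-γ))
        / (ascPochhammer ℝ (m+1)).eval (1-γ) := by
    intro j hj
    rw [div_eq_div_iff (ne_of_gt (hpos j)) hBne, hB,
      ← Finset.mul_prod_erase _ _ hj]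
    ring
  rw [Finset.sum_congr rfl hterm, ← Finset.sum_div, hQR]

lemma sq_sub_one_pow (m : ℕ) :
    ((X:ℝ[X]) ^ 2 - 1) ^ m
      = ∑ j ∈ Finset.range (m+1),
          C ((m.choose j : ℝ) * (-2:ℝ)^(m-j)) * (X + C 1) ^ (m+j) := by
  have h1 : ((X:ℝ[X]) ^ 2 - 1) = (X + C 1) * ((X + C 1) + C (-2)) := by
    simp only [map_neg, map_ofNat, map_one]
    ring
  rw [h1, mul_pow, add_pow (X + C 1) (C (-2)) m, Finset.mul_sum]
  refine Finset.sum_congr rfl ?_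
  intro j hj
  rw [pow_add, Polynomial.C_mul, ← map_pow, map_natCast]
  ring

lemma iterDeriv_sq_sub_one (m : ℕ) :
    derivative^[m] (((X:ℝ[X]) ^ 2 - 1) ^ m) =
      ∑ j ∈ Finset.range (m+1),
        C ((m.choose j : ℝ) * (-2:ℝ)^(m-j) * ((m+j).descFactorial m : ℝ)) * (X + C 1) ^ j := by
  rw [sq_sub_one_pow, Polynomial.iterate_derivative_sum]
  refine Finset.sum_congr rfl ?_
  intro j hj
  rw [Polynomial.iterate_derivative_C_mul]
  have h1 : ((X:ℝ[X]) + C 1) ^ (m+j) = ((X:ℝ[X]) ^ (m+j)).comp (X + C 1) := by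
    rw [Polynomial.X_pow_comp]
  rw [h1, iter_deriv_comp_X_add_one, Polynomial.iterate_derivative_X_pow_eq_C_mul]
  have h2 : m + j - m = j := by omega
  rw [h2, Polynomial.mul_comp, Polynomial.C_comp, Polynomial.X_pow_comp]
  rw [← mul_assoc, ← Polynomial.C_mul]

lemma P_eq_sum (m : ℕ) (x : ℝ) :
    P m x = (2 ^ m * m.factorial : ℝ)⁻¹ *
      ∑ j ∈ Finset.range (m+1),
        (m.choose j : ℝ) * (-2:ℝ)^(m-j) * ((m+j).descFactorial m : ℝ) * (1+x)^j := by
  unfold P legendrePoly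
  rw [iterDeriv_sq_sub_one, Polynomial.eval_mul, Polynomial.eval_C,
    Polynomial.eval_finset_sum]
  congr 1
  refine Finset.sum_congr rfl ?_
  intro j hj
  rw [Polynomial.eval_mul, Polynomial.eval_C, Polynomial.eval_pow,
    Polynomial.eval_add, Polynomial.eval_X, Polynomial.eval_C]
  ring_nf

theorem integral_legendre_left_weight (γ : ℝ) (hγ0 : 0 < γ) (hγ1 : γ < 1) (m : ℕ) :
    ∫ x in (-1 : ℝ)..1, P m x * (1 + x) ^ (-γ)
      = (-1) ^ m * 2 ^ (1 - γ) * (ascPochhammer ℝ m).eval γ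
          / (ascPochhammer ℝ (m + 1)).eval (1 - γ) := by
  have hpos : ∀ j : ℕ, (0:ℝ) < (j:ℝ)+1-γ := by
    intro j
    have : (0:ℝ) ≤ (j:ℝ) := Nat.cast_nonneg j
    linarith
  have hEq : Set.EqOn (fun x => P m x * (1 + x) ^ (-γ))
      (fun x => (2 ^ m * m.factorial : ℝ)⁻¹ *
        ∑ j ∈ Finset.range (m+1),
          (m.choose j : ℝ) * (-2:ℝ)^(m-j) * ((m+j).descFactorial m : ℝ) *
            (1+x) ^ ((j:ℝ) - γ))
      (Set.uIcc (-1:ℝ) 1) := by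
    intro x hx
    have hx' : (0:ℝ) ≤ 1 + x := by
      rw [Set.uIcc_of_le (by norm_num : (-1:ℝ) ≤ 1)] at hx
      have := hx.1; linarith
    have hkey : ∀ j : ℕ, (1+x)^j * (1+x) ^ (-γ) = (1+x) ^ ((j:ℝ) - γ) := by
      intro j
      rcases hx'.eq_or_lt with h|h
      · rw [← h]
        have hγne : -γ ≠ 0 := neg_ne_zero.mpr hγ0.ne'
        have hjγ : (j:ℝ) - γ ≠ 0 := by
          rcases j with _|j
          · simpa using hγ0.ne'
          · have h1 : (1:ℝ) ≤ ((j+1 : ℕ):ℝ) := by exact_mod_cast Nat.succ_le_succ (Nat.zero_le j)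
            have : (0:ℝ) < ((j+1:ℕ):ℝ) - γ := by linarith
            exact this.ne'
        rw [Real.zero_rpow hγne, Real.zero_rpow hjγ, mul_zero]
      · rw [← Real.rpow_natCast (1+x) j, ← Real.rpow_add h]
        norm_num [sub_eq_add_neg]
    show P m x * (1+x) ^ (-γ) = _
    rw [P_eq_sum, mul_assoc, Finset.sum_mul]
    congr 1
    refine Finset.sum_congr rfl fun j _ => ?_
    rw [mul_assoc, hkey j]
  have hrint : ∀ j : ℕ, IntervalIntegrable (fun x : ℝ => (1+x) ^ ((j:ℝ)-γ))
      MeasureTheory.volume (-1) 1 := by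
    intro j
    have hr : -1 < (j:ℝ) - γ := by
      have : (0:ℝ) ≤ (j:ℝ) := Nat.cast_nonneg j
      linarith
    have h := (intervalIntegral.intervalIntegrable_rpow' (a := 0) (b := 2) hr).comp_add_left 1
    norm_num at h
    exact h
  have hrval : ∀ j : ℕ, (∫ x in (-1:ℝ)..1, (1+x) ^ ((j:ℝ)-γ))
      = (2:ℝ) ^ ((j:ℝ)+1-γ) / ((j:ℝ)+1-γ) := by
    intro j
    have hr : -1 < (j:ℝ) - γ := by
      have : (0:ℝ) ≤ (j:ℝ) := Nat.cast_nonneg j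
      linarith
    have h0 : (∫ x in (-1:ℝ)..1, (1+x) ^ ((j:ℝ)-γ))
        = ∫ x in (0:ℝ)..2, x ^ ((j:ℝ)-γ) := by
      have h := intervalIntegral.integral_comp_add_left (a := (-1:ℝ)) (b := 1)
        (fun y : ℝ => y ^ ((j:ℝ)-γ)) 1
      norm_num at h
      exact h
    rw [h0, integral_rpow (Or.inl hr), Real.zero_rpow (by linarith : (j:ℝ) - γ + 1 ≠ 0),
      sub_zero, show (j:ℝ) - γ + 1 = (j:ℝ)+1-γ from by ring]
  rw [intervalIntegral.integral_congr hEq, intervalIntegral.integral_const_mul,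
    intervalIntegral.integral_finset_sum (fun j _ => ((hrint j).const_mul _))]
  have hsum : ∑ j ∈ Finset.range (m+1),
      (∫ x in (-1:ℝ)..1,
        (m.choose j : ℝ) * (-2:ℝ)^(m-j) * ((m+j).descFactorial m : ℝ) * (1+x) ^ ((j:ℝ)-γ))
      = ∑ j ∈ Finset.range (m+1),
          (m.choose j : ℝ) * (-2:ℝ)^(m-j) * ((m+j).descFactorial m : ℝ) *
            ((2:ℝ) ^ ((j:ℝ)+1-γ) / ((j:ℝ)+1-γ)) := by
    refine Finset.sum_congr rfl fun j _ => ?_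
    rw [intervalIntegral.integral_const_mul, hrval j]
  rw [hsum, Finset.mul_sum]
  have hterm : ∀ j ∈ Finset.range (m+1),
      (2 ^ m * m.factorial : ℝ)⁻¹ *
        ((m.choose j : ℝ) * (-2:ℝ)^(m-j) * ((m+j).descFactorial m : ℝ) *
          ((2:ℝ) ^ ((j:ℝ)+1-γ) / ((j:ℝ)+1-γ)))
      = (2:ℝ) ^ ((1:ℝ)-γ) *
          (((-1:ℝ)^(m-j) * (m.choose j) * ((m+j).choose m)) / ((j:ℝ)+1-γ)) := by
    intro j hj
    have hjm : j ≤ m := by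
      have := Finset.mem_range.mp hj; omega
    have h2 : (2:ℝ)^((j:ℝ)+1-γ) = 2^j * 2^((1:ℝ)-γ) := by
      rw [show (j:ℝ)+1-γ = (j:ℝ) + (1-γ) from by ring, Real.rpow_add two_pos,
        Real.rpow_natCast]
    have hdf : ((m+j).descFactorial m : ℝ) = (m.factorial : ℝ) * ((m+j).choose m : ℝ) := by
      exact_mod_cast congrArg (Nat.cast (R := ℝ)) (Nat.descFactorial_eq_factorial_mul_choose (m+j) m)
    have hneg : (-2:ℝ)^(m-j) = (-1:ℝ)^(m-j) * 2^(m-j) := by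
      rw [show (-2:ℝ) = (-1) * 2 from by norm_num, mul_pow]
    have hpow : (2:ℝ)^(m-j) * 2^j = 2^m := pow_sub_mul_pow 2 hjm
    rw [h2, hdf, hneg, ← hpow]
    have hne1 : ((j:ℝ)+1-γ) ≠ 0 := (hpos j).ne'
    have hne2 : (2:ℝ)^(m-j) ≠ 0 := by positivity
    have hne3 : (2:ℝ)^j ≠ 0 := by positivity
    have hne4 : (m.factorial : ℝ) ≠ 0 := by positivity
    field_simp
  rw [Finset.sum_congr rfl hterm, ← Finset.mul_sum, key_identity m γ hγ1]
  ring
end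

section
/- Let 0 < β < 1 and define q_m = ∫_{-1}^1 P_m(x)(1-x)^{-β} dx. Then q_0 = 2^{1-β}/(1-β) and q_{m+1} = ((m+β)/(m+2-β)) q_m for every natural number m. -/
/-!
Two first-order recurrences obtained from Rodrigues' formula combine into the polynomial identity
`(1 - x) (P_{m+1} + P_m)' = (m + 1) (P_m - P_{m+1})`. Integrate it against `(1 - x)^(-β)`: on the
left, `(1 - x) (1 - x)^(-β) = (1 - x)^(1-β)`, and an integration by parts turns it into
`(1 - β) (q_{m+1} + q_m)`. No boundary terms appear, because `(1 - x)^(1-β)` vanishes at `1` and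
`P_{m+1}(-1) + P_m(-1) = 0`. Hence `(m + 1)(q_m - q_{m+1}) = (1 - β)(q_{m+1} + q_m)`.
-/

open Polynomial intervalIntegral Filter

open MeasureTheory Set

namespace Polynomial

section Rodrigues

variable {R : Type*} [CommRing R]

theorem iterate_derivative_succ_X_mul (k : ℕ) (f : R[X]) :
    derivative^[k + 1] (X * f) = X * derivative^[k + 1] f + (k + 1 : R[X]) * derivative^[k] f := by
  rw [mul_comm, iterate_derivative_mul_X, Nat.add_sub_cancel, nsmul_eq_mul]
  push_cast
  ring

theorem iterate_derivative_succ_X_sq_sub_one_mul_derivative (k : ℕ) (f : R[X]) :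
    derivative^[k + 1] ((X ^ 2 - 1) * derivative f) =
      (X ^ 2 - 1) * derivative^[k + 2] f + 2 * (k + 1 : R[X]) * X * derivative^[k + 1] f
        + (k + 1 : R[X]) * (k : R[X]) * derivative^[k] f := by
  have hsplit : (X ^ 2 - 1) * derivative f = derivative f * X * X - derivative f := by ring
  rw [hsplit, iterate_derivative_sub, iterate_derivative_mul_X, Nat.add_sub_cancel,
    iterate_derivative_derivative_mul_X, iterate_derivative_derivative_mul_X,
    ← Function.iterate_succ_apply]
  simp only [nsmul_eq_mul, Nat.cast_add, Nat.cast_one, Nat.succ_eq_add_one]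
  ring

theorem derivative_X_sq_sub_one_pow_succ (n : ℕ) :
    derivative ((X ^ 2 - 1 : R[X]) ^ (n + 1)) = C (2 * (n + 1) : R) * (X * (X ^ 2 - 1) ^ n) := by
  rw [derivative_pow_succ]
  simp only [derivative_sub, derivative_X_sq, derivative_one, sub_zero, map_mul, map_ofNat,
    map_add, map_natCast, map_one]
  ring

noncomputable def rodrigues (R : Type*) [CommRing R] (n : ℕ) : R[X] :=
  derivative^[n] ((X ^ 2 - 1) ^ n)

theorem derivative_rodrigues_succ (n : ℕ) :
    derivative (rodrigues R (n + 1)) =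
      C (2 * (n + 1) : R) * (X * derivative (rodrigues R n) + (n + 1 : R[X]) * rodrigues R n) := by
  rw [rodrigues, ← Function.iterate_succ_apply' derivative, Function.iterate_succ_apply,
    derivative_X_sq_sub_one_pow_succ, iterate_derivative_C_mul, iterate_derivative_succ_X_mul,
    Function.iterate_succ_apply', rodrigues]

/-- Stated for `n + 1` so that no truncated index `n - 1` appears. -/
theorem X_sq_sub_one_mul_derivative_rodrigues_succ (n : ℕ) :
    (X ^ 2 - 1) * derivative (rodrigues R (n + 1)) =
      (n + 1 : R[X]) * (n + 2 : R[X]) * derivative^[n] ((X ^ 2 - 1) ^ (n + 1)) := by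
  have hmul : (X ^ 2 - 1) * derivative ((X ^ 2 - 1 : R[X]) ^ (n + 1)) =
      C (2 * (n + 1) : R) * (X * (X ^ 2 - 1) ^ (n + 1)) := by
    rw [derivative_X_sq_sub_one_pow_succ]
    ring
  have h := congrArg (derivative^[n + 1]) hmul
  rw [iterate_derivative_succ_X_sq_sub_one_mul_derivative, iterate_derivative_C_mul,
    iterate_derivative_succ_X_mul] at h
  rw [rodrigues, ← Function.iterate_succ_apply' derivative]
  simp only [map_mul, map_ofNat, map_add, map_natCast, map_one] at h
  linear_combination h

theorem rodrigues_succ (n : ℕ) :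
    rodrigues R (n + 1) =
      C (2 * (n + 1) : R) * (X * rodrigues R n) + 2 * (X ^ 2 - 1) * derivative (rodrigues R n) := by
  cases n with
  | zero => norm_num [rodrigues]
  | succ n =>
    have h := X_sq_sub_one_mul_derivative_rodrigues_succ (R := R) n
    rw [rodrigues, Function.iterate_succ_apply, derivative_X_sq_sub_one_pow_succ,
      iterate_derivative_C_mul, iterate_derivative_succ_X_mul, ← rodrigues]
    simp only [map_mul, map_ofNat, map_add, map_natCast, map_one, Nat.cast_add, Nat.cast_one]
    linear_combination (-2 : R[X]) * h

end Rodrigues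

end Polynomial

theorem legendrePoly_eq_C_mul_rodrigues (n : ℕ) :
    legendrePoly n = C ((2 ^ n * n.factorial : ℝ))⁻¹ * rodrigues ℝ n :=
  rfl

theorem inv_two_pow_succ_mul_factorial_succ_mul (n : ℕ) :
    ((2 ^ (n + 1) * (n + 1).factorial : ℝ))⁻¹ * (2 * (n + 1)) = ((2 ^ n * n.factorial : ℝ))⁻¹ := by
  rw [Nat.factorial_succ]
  push_cast
  field_simp
  ring

theorem succ_mul_legendrePoly_succ (n : ℕ) :
    (n + 1 : ℝ[X]) * legendrePoly (n + 1) =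
      (n + 1 : ℝ[X]) * X * legendrePoly n + (X ^ 2 - 1) * derivative (legendrePoly n) := by
  have h := rodrigues_succ (R := ℝ) n
  have hκ := congrArg C (inv_two_pow_succ_mul_factorial_succ_mul n)
  simp only [map_mul, map_ofNat, map_add, map_natCast, map_one] at h hκ
  simp only [legendrePoly_eq_C_mul_rodrigues, derivative_C_mul]
  linear_combination (n + 1 : ℝ[X]) * C ((2 ^ (n + 1) * (n + 1).factorial : ℝ))⁻¹ * h
    + ((n + 1 : ℝ[X]) * X * rodrigues ℝ n + (X ^ 2 - 1) * derivative (rodrigues ℝ n)) * hκ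

theorem derivative_legendrePoly_succ (n : ℕ) :
    derivative (legendrePoly (n + 1)) =
      X * derivative (legendrePoly n) + (n + 1 : ℝ[X]) * legendrePoly n := by
  have h := derivative_rodrigues_succ (R := ℝ) n
  have hκ := congrArg C (inv_two_pow_succ_mul_factorial_succ_mul n)
  simp only [map_mul, map_ofNat, map_add, map_natCast, map_one] at h hκ
  simp only [legendrePoly_eq_C_mul_rodrigues, derivative_C_mul]
  linear_combination C ((2 ^ (n + 1) * (n + 1).factorial : ℝ))⁻¹ * h
    + (X * derivative (rodrigues ℝ n) + (n + 1 : ℝ[X]) * rodrigues ℝ n) * hκ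

theorem legendrePoly_zero : legendrePoly 0 = 1 := by
  simp [legendrePoly]

theorem legendrePoly_eval_neg_one (n : ℕ) : (legendrePoly n).eval (-1) = (-1) ^ n := by
  induction n with
  | zero => simp [legendrePoly_zero]
  | succ n ih =>
    have h := congrArg (eval (-1)) (succ_mul_legendrePoly_succ n)
    simp only [eval_add, eval_mul, eval_X, eval_sub, eval_pow, eval_one, eval_natCast, ih] at h
    have hn : (n + 1 : ℝ) ≠ 0 := by positivity
    apply mul_left_cancel₀ hn
    linear_combination h

theorem one_sub_X_mul_derivative_legendrePoly_succ_add (n : ℕ) :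
    (1 - X) * derivative (legendrePoly (n + 1) + legendrePoly n) =
      (n + 1 : ℝ[X]) * (legendrePoly n - legendrePoly (n + 1)) := by
  rw [derivative_add, derivative_legendrePoly_succ]
  linear_combination succ_mul_legendrePoly_succ n

theorem integral_one_sub_rpow (a : ℝ) {s : ℝ} (hs : -1 < s) :
    ∫ x in a..1, (1 - x) ^ s = (1 - a) ^ (s + 1) / (s + 1) := by
  rw [intervalIntegral.integral_comp_sub_left (fun y => y ^ s), sub_self,
    integral_rpow (Or.inl hs), Real.zero_rpow (by linarith), sub_zero]

theorem intervalIntegrable_eval_mul_one_sub_rpow (p : ℝ[X]) (a b : ℝ) {s : ℝ} (hs : -1 < s) :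
    IntervalIntegrable (fun x => p.eval x * (1 - x) ^ s) volume a b := by
  have hw : IntervalIntegrable (fun x : ℝ => (1 - x) ^ s) volume a b := by
    simpa using
      (intervalIntegral.intervalIntegrable_rpow' (a := 1 - a) (b := 1 - b) hs).comp_sub_left 1
  exact hw.continuousOn_mul p.continuous.continuousOn

/-- Integration by parts of `p' · (1 - x)^c`, written so that only the weight `(1 - x)^(c - 1)`
appears. -/
theorem integral_one_sub_mul_derivative_sub_mul_one_sub_rpow (p : ℝ[X]) {a c : ℝ} (ha : a ≤ 1)
    (hc : 0 < c) :
    ∫ x in a..1, ((1 - x) * p.derivative.eval x - c * p.eval x) * (1 - x) ^ (c - 1) =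
      -(p.eval a * (1 - a) ^ c) := by
  have hderiv : ∀ x ∈ Ioo a 1, HasDerivAt (fun y => p.eval y * (1 - y) ^ c)
      (((1 - x) * p.derivative.eval x - c * p.eval x) * (1 - x) ^ (c - 1)) x := by
    intro x hx
    have hx1 : 0 < 1 - x := sub_pos.2 hx.2
    have hw : HasDerivAt (fun y : ℝ => (1 - y) ^ c) (c * (1 - x) ^ (c - 1) * -1) x := by
      simpa using ((hasDerivAt_id x).const_sub 1).rpow_const (p := c) (Or.inl hx1.ne')
    refine ((p.hasDerivAt x).mul hw).congr_deriv ?_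
    rw [Real.rpow_sub_one hx1.ne']
    field_simp
    ring
  have hcont : ContinuousOn (fun y => p.eval y * (1 - y) ^ c) (Icc a 1) :=
    p.continuous.continuousOn.mul
      ((continuous_const.sub continuous_id).continuousOn.rpow_const fun _ _ => Or.inr hc.le)
  have hint : IntervalIntegrable
      (fun x => ((1 - x) * p.derivative.eval x - c * p.eval x) * (1 - x) ^ (c - 1)) volume a 1 := by
    convert intervalIntegrable_eval_mul_one_sub_rpow ((1 - X) * derivative p - C c * p) a 1
      (s := c - 1) (by linarith) using 3
    simp
  rw [intervalIntegral.integral_eq_sub_of_hasDerivAt_of_le ha hcont hderiv hint, sub_self,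
    Real.zero_rpow hc.ne', mul_zero, zero_sub]

theorem integral_legendre_mul_one_sub_rpow_succ {β : ℝ} (hβ : β < 1) (m : ℕ) :
    (m + 2 - β) * ∫ x in (-1 : ℝ)..1, P (m + 1) x * (1 - x) ^ (-β) =
      (m + β) * ∫ x in (-1 : ℝ)..1, P m x * (1 - x) ^ (-β) := by
  have hibp := integral_one_sub_mul_derivative_sub_mul_one_sub_rpow
    (legendrePoly (m + 1) + legendrePoly m) (by norm_num : (-1 : ℝ) ≤ 1) (sub_pos.2 hβ)
  have hend : (legendrePoly (m + 1) + legendrePoly m).eval (-1) = 0 := by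
    simp [legendrePoly_eval_neg_one, pow_succ]
  have hintegrand : ∀ x : ℝ,
      ((1 - x) * (legendrePoly (m + 1) + legendrePoly m).derivative.eval x
        - (1 - β) * (legendrePoly (m + 1) + legendrePoly m).eval x) * (1 - x) ^ (1 - β - 1) =
      (m + β) * (P m x * (1 - x) ^ (-β)) - (m + 2 - β) * (P (m + 1) x * (1 - x) ^ (-β)) := by
    intro x
    have h := congrArg (eval x) (one_sub_X_mul_derivative_legendrePoly_succ_add m)
    simp only [eval_mul, eval_sub, eval_add, eval_one, eval_X, eval_natCast] at h
    rw [sub_sub_cancel_left]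
    simp only [P, eval_add]
    linear_combination (1 - x) ^ (-β) * h
  have hexp : (-1 : ℝ) < -β := by linarith
  simp only [hintegrand, hend, zero_mul, neg_zero] at hibp
  rw [intervalIntegral.integral_sub, intervalIntegral.integral_const_mul,
    intervalIntegral.integral_const_mul] at hibp
  · linarith
  · exact (intervalIntegrable_eval_mul_one_sub_rpow _ _ _ hexp).const_mul _
  · exact (intervalIntegrable_eval_mul_one_sub_rpow _ _ _ hexp).const_mul _

theorem integral_legendre_right_weight_recurrence_general (β : ℝ) (hβ1 : β < 1)
    (q : ℕ → ℝ) (hq : ∀ m, q m = ∫ x in (-1 : ℝ)..1, P m x * (1 - x) ^ (-β)) :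
    q 0 = 2 ^ (1 - β) / (1 - β) ∧
    ∀ m : ℕ, q (m + 1) = ((m + β) / (m + 2 - β)) * q m := by
  refine ⟨?_, fun m => ?_⟩
  · simp only [hq, P, legendrePoly_zero, eval_one, one_mul]
    rw [integral_one_sub_rpow _ (by linarith)]
    norm_num [neg_add_eq_sub]
  · have hm : (0 : ℝ) < m + 2 - β := by linarith [(m.cast_nonneg : (0 : ℝ) ≤ m)]
    rw [div_mul_eq_mul_div, eq_div_iff hm.ne', hq, hq, mul_comm]
    exact integral_legendre_mul_one_sub_rpow_succ hβ1 m

theorem integral_legendre_right_weight_recurrence (β : ℝ) (hβ0 : 0 < β) (hβ1 : β < 1)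
    (q : ℕ → ℝ) (hq : ∀ m, q m = ∫ x in (-1 : ℝ)..1, P m x * (1 - x) ^ (-β)) :
    q 0 = 2 ^ (1 - β) / (1 - β) ∧
    ∀ m : ℕ, q (m + 1) = ((m + β) / (m + 2 - β)) * q m :=
  integral_legendre_right_weight_recurrence_general β hβ1 q hq
end

section
/- Let R_m = ξ_m P_m + η_m P_{m+1} + θ_m P_{m+2} where P_j is the Legendre polynomial of degree j. Then for all natural numbers m > n, ∫_{-1}^1 R_m(x) R_n''(x) dx = 0; consequently the stiffness matrix with entries a_{mn} = -∫_{-1}^1 R_m R_n'' is diagonal (on the symmetric class where a_{mn}=a_{nm}), with diagonal entries a_{nn} = -2(2n+3) ξ_n θ_n. -/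
open Polynomial intervalIntegral Filter

noncomputable def F (n : ℕ) : Polynomial ℝ := ((X : Polynomial ℝ) ^ 2 - 1) ^ n

lemma F_eq (n : ℕ) : F n = ((X : Polynomial ℝ) - C 1) ^ n * ((X : Polynomial ℝ) + C 1) ^ n := by
  rw [F, ← mul_pow]; congr 1; simp; ring

lemma iter_F (n k : ℕ) : derivative^[k] (F n) =
    ∑ j ∈ Finset.range (k + 1), k.choose j •
      ((n.descFactorial (k - j) • ((X : Polynomial ℝ) - C 1) ^ (n - (k - j))) *
       (n.descFactorial j • ((X : Polynomial ℝ) + C 1) ^ (n - j))) := by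
  rw [F_eq, Polynomial.iterate_derivative_mul]
  refine Finset.sum_congr rfl fun j hj => ?_
  rw [iterate_derivative_X_sub_pow, iterate_derivative_X_add_pow]

lemma eval_one_iter_F_of_lt {n k : ℕ} (h : k < n) : eval 1 (derivative^[k] (F n)) = 0 := by
  rw [iter_F]
  simp only [eval_finset_sum, eval_smul, eval_mul, eval_pow, eval_sub, eval_add, eval_X, eval_C,
    eval_one, smul_eq_mul]
  refine Finset.sum_eq_zero fun j hj => ?_
  have : (1 : ℝ) - 1 = 0 := by ring
  rw [this, zero_pow]
  · ring
  · omega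

lemma eval_neg_one_iter_F_of_lt {n k : ℕ} (h : k < n) : eval (-1) (derivative^[k] (F n)) = 0 := by
  rw [iter_F]
  simp only [eval_finset_sum, eval_smul, eval_mul, eval_pow, eval_sub, eval_add, eval_X, eval_C,
    eval_one, smul_eq_mul]
  refine Finset.sum_eq_zero fun j hj => ?_
  have : (-1 : ℝ) + 1 = 0 := by ring
  rw [this, zero_pow]
  · ring
  · simp only [Finset.mem_range] at hj; omega

lemma eval_one_iter_F_self (n : ℕ) : eval 1 (derivative^[n] (F n)) = 2 ^ n * n.factorial := by
  rw [iter_F, eval_finset_sum]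
  rw [Finset.sum_eq_single 0]
  · simp [Nat.descFactorial_self]
    ring
  · intro j hj hj0
    simp only [eval_smul, eval_mul, eval_smul, eval_pow, eval_sub, eval_add, eval_X, eval_C,
      smul_eq_mul]
    have : (1 : ℝ) - 1 = 0 := by ring
    rw [this, zero_pow (by simp only [Finset.mem_range] at hj; omega)]
    ring
  · simp

lemma eval_neg_one_iter_F_self (n : ℕ) :
    eval (-1) (derivative^[n] (F n)) = (-2) ^ n * n.factorial := by
  rw [iter_F, eval_finset_sum]
  rw [Finset.sum_eq_single n]
  · simp [Nat.descFactorial_self]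
    ring_nf
    exact Or.inl trivial
  · intro j hj hjn
    simp only [eval_smul, eval_mul, eval_smul, eval_pow, eval_sub, eval_add, eval_X, eval_C,
      smul_eq_mul]
    have : (-1 : ℝ) + 1 = 0 := by ring
    rw [this, zero_pow (by simp only [Finset.mem_range] at hj; omega)]
    ring
  · simp

lemma eval_one_iter_F_succ (n : ℕ) :
    eval 1 (derivative^[n + 1] (F n)) = (n + 1) * (n.factorial * (n * 2 ^ (n - 1))) := by
  rw [iter_F, eval_finset_sum]
  rw [Finset.sum_eq_single 1]
  · simp only [eval_smul, eval_mul, eval_pow, eval_sub, eval_add, eval_X, eval_C, eval_one, eval_natCast, eval_zero,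
      smul_eq_mul, nsmul_eq_mul, Nat.add_sub_cancel, Nat.descFactorial_self,
      Nat.choose_one_right, Nat.sub_self, pow_zero, Nat.descFactorial_one]
    push_cast
    ring
  · intro j hj hj1
    simp only [Finset.mem_range] at hj
    simp only [eval_smul, eval_mul, eval_pow, eval_sub, eval_add, eval_X, eval_C, eval_one, eval_natCast, eval_zero,
      smul_eq_mul, nsmul_eq_mul]
    rcases Nat.eq_zero_or_pos j with rfl | hpos
    · have h0 : n.descFactorial (n + 1 - 0) = 0 := by
        simp [Nat.descFactorial_eq_zero_iff_lt]
      rw [h0]; push_cast; ring_nf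
    · have h1 : (1 : ℝ) - 1 = 0 := by ring
      rw [h1, zero_pow (by omega)]; ring
  · intro h; exact absurd (Finset.mem_range.mpr (by omega)) h

lemma eval_neg_one_iter_F_succ (n : ℕ) :
    eval (-1) (derivative^[n + 1] (F n)) =
      (n + 1) * (n.factorial * (n * (-2 : ℝ) ^ (n - 1))) := by
  rw [iter_F, eval_finset_sum]
  rw [Finset.sum_eq_single n]
  · simp only [eval_smul, eval_mul, eval_pow, eval_sub, eval_add, eval_X, eval_C, eval_one, eval_natCast, eval_zero,
      smul_eq_mul, nsmul_eq_mul, Nat.add_sub_cancel, Nat.descFactorial_self, Nat.sub_self,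
      pow_zero]
    have hc : (n + 1).choose n = n + 1 := Nat.choose_succ_self_right n
    have h1 : n + 1 - n = 1 := by omega
    have h2 : (-1 : ℝ) - 1 = -2 := by ring
    rw [h1, hc, Nat.descFactorial_one, h2]
    push_cast
    ring
  · intro j hj hjn
    simp only [Finset.mem_range] at hj
    simp only [eval_smul, eval_mul, eval_pow, eval_sub, eval_add, eval_X, eval_C, eval_one, eval_natCast, eval_zero,
      smul_eq_mul, nsmul_eq_mul]
    rcases Nat.lt_or_ge j n with hlt | hge
    · have h1 : (-1 : ℝ) + 1 = 0 := by ring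
      rw [h1, zero_pow (by omega)]; ring
    · have hj1 : j = n + 1 := by omega
      subst hj1
      have h0 : n.descFactorial (n + 1) = 0 := by
        simp [Nat.descFactorial_eq_zero_iff_lt]
      rw [h0]; push_cast; ring_nf
  · intro h; exact absurd (Finset.mem_range.mpr (by omega)) h

lemma legendre_eq (n : ℕ) :
    legendrePoly n = C ((2 ^ n * n.factorial : ℝ))⁻¹ * derivative^[n] (F n) := rfl

lemma fact_ne (n : ℕ) : ((2 ^ n * n.factorial : ℝ)) ≠ 0 := by
  have := n.factorial_pos
  positivity

lemma legendre_eval_one (n : ℕ) : eval 1 (legendrePoly n) = 1 := by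
  rw [legendre_eq, eval_mul, eval_C, eval_one_iter_F_self]
  field_simp

lemma legendre_eval_neg_one (n : ℕ) : eval (-1) (legendrePoly n) = (-1) ^ n := by
  rw [legendre_eq, eval_mul, eval_C, eval_neg_one_iter_F_self]
  have h : ((-2 : ℝ)) ^ n = (-1) ^ n * 2 ^ n := by rw [← neg_one_mul, mul_pow]
  rw [h]
  have := fact_ne n
  field_simp

lemma derivative_legendre (n : ℕ) :
    derivative (legendrePoly n) =
      C ((2 ^ n * n.factorial : ℝ))⁻¹ * derivative^[n + 1] (F n) := by
  rw [legendre_eq, derivative_C_mul, Function.iterate_succ_apply']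

lemma legendre_deriv_eval_one (n : ℕ) :
    eval 1 (derivative (legendrePoly n)) = n * (n + 1) / 2 := by
  rw [derivative_legendre, eval_mul, eval_C, eval_one_iter_F_succ]
  rcases n with _ | m
  · norm_num
  · have h1 : m + 1 - 1 = m := by omega
    rw [h1, Nat.factorial_succ]
    have h2 : (2 : ℝ) ^ (m + 1) = 2 * 2 ^ m := by rw [pow_succ]; ring
    rw [h2]
    have hm : (m.factorial : ℝ) ≠ 0 := Nat.cast_ne_zero.mpr m.factorial_pos.ne'
    have h2m : (2 : ℝ) ^ m ≠ 0 := by positivity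
    push_cast
    field_simp

lemma legendre_deriv_eval_neg_one (n : ℕ) :
    eval (-1) (derivative (legendrePoly n)) = (-1 : ℝ) ^ (n + 1) * (n * (n + 1) / 2) := by
  rw [derivative_legendre, eval_mul, eval_C, eval_neg_one_iter_F_succ]
  rcases n with _ | m
  · norm_num
  · have h1 : m + 1 - 1 = m := by omega
    rw [h1, Nat.factorial_succ]
    have h2 : (2 : ℝ) ^ (m + 1) = 2 * 2 ^ m := by rw [pow_succ]; ring
    have h3 : ((-2 : ℝ)) ^ m = (-1) ^ m * 2 ^ m := by rw [← neg_one_mul, mul_pow]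
    have h4 : ((-1 : ℝ)) ^ (m + 1 + 1) = (-1) ^ m := by rw [pow_succ, pow_succ]; ring
    rw [h2, h3, h4]
    have hm : (m.factorial : ℝ) ≠ 0 := Nat.cast_ne_zero.mpr m.factorial_pos.ne'
    have h2m : (2 : ℝ) ^ m ≠ 0 := by positivity
    push_cast
    field_simp

lemma poly_intervalIntegrable (p : Polynomial ℝ) :
    IntervalIntegrable (fun x => eval x p) MeasureTheory.volume (-1 : ℝ) 1 :=
  (Polynomial.continuous p).intervalIntegrable _ _

lemma integral_comm_eval (p q : Polynomial ℝ) :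
    ∫ x in (-1 : ℝ)..1, eval x p * eval x q = ∫ x in (-1 : ℝ)..1, eval x q * eval x p := by
  exact intervalIntegral.integral_congr fun x _ => mul_comm _ _

lemma poly_ibp (p q : Polynomial ℝ) :
    ∫ x in (-1 : ℝ)..1, eval x (derivative p) * eval x q =
      eval 1 p * eval 1 q - eval (-1) p * eval (-1) q -
        ∫ x in (-1 : ℝ)..1, eval x p * eval x (derivative q) := by
  have h := intervalIntegral.integral_mul_deriv_eq_deriv_mul
    (u := fun x => eval x q) (v := fun x => eval x p)
    (u' := fun x => eval x (derivative q)) (v' := fun x => eval x (derivative p))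
    (fun x _ => q.hasDerivAt x) (fun x _ => p.hasDerivAt x)
    (poly_intervalIntegrable _) (poly_intervalIntegrable _)
  rw [integral_comm_eval (derivative p) q, h, integral_comm_eval (derivative q) p]
  ring

lemma ortho_shift (n k : ℕ) (hk : k ≤ n) (q : Polynomial ℝ) :
    ∫ x in (-1 : ℝ)..1, eval x (derivative^[n] (F n)) * eval x q =
      (-1 : ℝ) ^ k *
        ∫ x in (-1 : ℝ)..1, eval x (derivative^[n - k] (F n)) * eval x (derivative^[k] q) := by
  induction k with
  | zero => simp
  | succ k ih =>
    rw [ih (by omega)]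
    have hiter : derivative^[n - k] (F n) = derivative (derivative^[n - (k + 1)] (F n)) := by
      have h : n - k = (n - (k + 1)) + 1 := by omega
      rw [h, Function.iterate_succ_apply']
    rw [hiter, poly_ibp, eval_one_iter_F_of_lt (by omega), eval_neg_one_iter_F_of_lt (by omega),
      Function.iterate_succ_apply']
    ring

lemma ortho (n : ℕ) (q : Polynomial ℝ) (hq : q.natDegree < n) :
    ∫ x in (-1 : ℝ)..1, eval x (legendrePoly n) * eval x q = 0 := by
  have h0 : (fun x => eval x (legendrePoly n) * eval x q)
      = fun x => ((2 ^ n * n.factorial : ℝ))⁻¹ * (eval x (derivative^[n] (F n)) * eval x q) := by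
    funext x
    rw [legendre_eq, eval_mul, eval_C]
    ring
  rw [intervalIntegral.integral_congr (fun x _ => congrFun h0 x),
    intervalIntegral.integral_const_mul, ortho_shift n n le_rfl q,
    Polynomial.iterate_derivative_eq_zero hq]
  simp

lemma natDegree_legendre_le (n : ℕ) : (legendrePoly n).natDegree ≤ n := by
  rw [legendre_eq]
  refine (natDegree_C_mul_le _ _).trans ?_
  refine (natDegree_iterate_derivative _ _).trans ?_
  have h2 : ((X : Polynomial ℝ) ^ 2 - 1).natDegree ≤ 2 := by
    refine (natDegree_sub_le _ _).trans ?_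
    simp [natDegree_X_pow]
  have h1 : (F n).natDegree ≤ 2 * n := by
    refine (natDegree_pow_le).trans ?_
    calc n * ((X : Polynomial ℝ) ^ 2 - 1).natDegree ≤ n * 2 := Nat.mul_le_mul_left n h2
      _ = 2 * n := by ring
  omega

lemma ortho2 (i j : ℕ) (h : j < i + 2) :
    ∫ x in (-1 : ℝ)..1,
      eval x (legendrePoly i) * eval x (derivative (derivative (legendrePoly j))) = 0 := by
  by_cases h2 : j < 2
  · have hz : derivative (derivative (legendrePoly j)) = 0 := by
      have hd : (legendrePoly j).natDegree < 2 := lt_of_le_of_lt (natDegree_legendre_le j) h2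
      have h0 := Polynomial.iterate_derivative_eq_zero hd
      rw [show (2 : ℕ) = 1 + 1 from rfl, Function.iterate_add_apply] at h0
      simpa using h0
    rw [hz]
    simp
  · apply ortho
    have hd1 : (derivative (derivative (legendrePoly j))).natDegree ≤ j - 2 := by
      refine (natDegree_derivative_le _).trans ?_
      have := natDegree_derivative_le (legendrePoly j)
      have := natDegree_legendre_le j
      omega
    omega

lemma key_val (n : ℕ) :
    ∫ x in (-1 : ℝ)..1,
        eval x (legendrePoly n) * eval x (derivative (derivative (legendrePoly (n + 2)))) =
      2 * (2 * n + 3) := by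
  rw [integral_comm_eval, poly_ibp (derivative (legendrePoly (n + 2))) (legendrePoly n),
    poly_ibp (legendrePoly (n + 2)) (derivative (legendrePoly n))]
  have hortho : ∫ x in (-1 : ℝ)..1,
      eval x (legendrePoly (n + 2)) * eval x (derivative (derivative (legendrePoly n))) = 0 :=
    ortho2 (n + 2) n (by omega)
  rw [hortho, legendre_eval_one, legendre_eval_neg_one, legendre_eval_one, legendre_eval_neg_one,
    legendre_deriv_eval_one, legendre_deriv_eval_neg_one, legendre_deriv_eval_one,
    legendre_deriv_eval_neg_one]
  have e1 : ((-1 : ℝ)) ^ (n + 2 + 1) * (-1) ^ n = -1 := by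
    have : (-1 : ℝ) ^ (n + 2 + 1) * (-1) ^ n = ((-1) ^ 2) ^ n * (-1) ^ 3 := by
      rw [← pow_mul, ← pow_add, ← pow_add]; ring_nf
    rw [this]; norm_num
  have e2 : ((-1 : ℝ)) ^ (n + 2) * ((-1 : ℝ) ^ (n + 1)) = -1 := by
    have : (-1 : ℝ) ^ (n + 2) * (-1) ^ (n + 1) = ((-1) ^ 2) ^ n * (-1) ^ 3 := by
      rw [← pow_mul, ← pow_add]; ring_nf
    rw [this]; norm_num
  push_cast
  linear_combination (-((↑n + 2) * (↑n + 2 + 1) / 2)) * e1 + (↑n * (↑n + 1) / 2) * e2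

lemma intg_mul (p q : Polynomial ℝ) (a : ℝ) :
    IntervalIntegrable (fun x => a * (eval x p * eval x q))
      MeasureTheory.volume (-1 : ℝ) 1 :=
  ((continuous_const.mul ((Polynomial.continuous p).mul
    (Polynomial.continuous q)))).intervalIntegrable _ _

lemma split3L (a1 a2 a3 : ℝ) (p1 p2 p3 q : Polynomial ℝ) :
    ∫ x in (-1 : ℝ)..1,
        (a1 * eval x p1 + a2 * eval x p2 + a3 * eval x p3) * eval x q =
      a1 * (∫ x in (-1 : ℝ)..1, eval x p1 * eval x q) +
        a2 * (∫ x in (-1 : ℝ)..1, eval x p2 * eval x q) +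
          a3 * (∫ x in (-1 : ℝ)..1, eval x p3 * eval x q) := by
  have hfun : (fun x => (a1 * eval x p1 + a2 * eval x p2 + a3 * eval x p3) * eval x q)
      = fun x => a1 * (eval x p1 * eval x q) +
          (a2 * (eval x p2 * eval x q) + a3 * (eval x p3 * eval x q)) := by
    funext x; ring
  rw [intervalIntegral.integral_congr (fun x _ => congrFun hfun x),
    intervalIntegral.integral_add (intg_mul _ _ _) ((intg_mul _ _ _).add (intg_mul _ _ _)),
    intervalIntegral.integral_add (intg_mul _ _ _) (intg_mul _ _ _),
    intervalIntegral.integral_const_mul, intervalIntegral.integral_const_mul,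
    intervalIntegral.integral_const_mul]
  ring

lemma split3R (b1 b2 b3 : ℝ) (A q1 q2 q3 : Polynomial ℝ) :
    ∫ x in (-1 : ℝ)..1,
        eval x A * (b1 * eval x q1 + b2 * eval x q2 + b3 * eval x q3) =
      b1 * (∫ x in (-1 : ℝ)..1, eval x A * eval x q1) +
        b2 * (∫ x in (-1 : ℝ)..1, eval x A * eval x q2) +
          b3 * (∫ x in (-1 : ℝ)..1, eval x A * eval x q3) := by
  have hfun : (fun x => eval x A * (b1 * eval x q1 + b2 * eval x q2 + b3 * eval x q3))
      = fun x => b1 * (eval x A * eval x q1) +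
          (b2 * (eval x A * eval x q2) + b3 * (eval x A * eval x q3)) := by
    funext x; ring
  rw [intervalIntegral.integral_congr (fun x _ => congrFun hfun x),
    intervalIntegral.integral_add (intg_mul _ _ _) ((intg_mul _ _ _).add (intg_mul _ _ _)),
    intervalIntegral.integral_add (intg_mul _ _ _) (intg_mul _ _ _),
    intervalIntegral.integral_const_mul, intervalIntegral.integral_const_mul,
    intervalIntegral.integral_const_mul]
  ring

theorem stiffness_matrix_diagonal (ξ η θ : ℕ → ℝ) :
    (∀ m n : ℕ, m > n →
      ∫ x in (-1 : ℝ)..1,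
          (ξ m * P m x + η m * P (m + 1) x + θ m * P (m + 2) x)
            * (ξ n * P'' n x + η n * P'' (n + 1) x + θ n * P'' (n + 2) x) = 0) ∧
    (∀ n : ℕ,
      -∫ x in (-1 : ℝ)..1,
          (ξ n * P n x + η n * P (n + 1) x + θ n * P (n + 2) x)
            * (ξ n * P'' n x + η n * P'' (n + 1) x + θ n * P'' (n + 2) x)
        = -2 * (2 * n + 3) * ξ n * θ n) := by
  have hpt : ∀ (m n : ℕ) (a b c d e f : ℝ),
      (∫ x in (-1 : ℝ)..1,
        (a * P m x + b * P (m + 1) x + c * P (m + 2) x) *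
          (d * P'' n x + e * P'' (n + 1) x + f * P'' (n + 2) x))
      = d * (a * (∫ x in (-1 : ℝ)..1, eval x (legendrePoly m) *
              eval x (derivative (derivative (legendrePoly n))))
          + b * (∫ x in (-1 : ℝ)..1, eval x (legendrePoly (m + 1)) *
              eval x (derivative (derivative (legendrePoly n))))
          + c * (∫ x in (-1 : ℝ)..1, eval x (legendrePoly (m + 2)) *
              eval x (derivative (derivative (legendrePoly n)))))
      + e * (a * (∫ x in (-1 : ℝ)..1, eval x (legendrePoly m) *
              eval x (derivative (derivative (legendrePoly (n + 1)))))
          + b * (∫ x in (-1 : ℝ)..1, eval x (legendrePoly (m + 1)) *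
              eval x (derivative (derivative (legendrePoly (n + 1)))))
          + c * (∫ x in (-1 : ℝ)..1, eval x (legendrePoly (m + 2)) *
              eval x (derivative (derivative (legendrePoly (n + 1))))))
      + f * (a * (∫ x in (-1 : ℝ)..1, eval x (legendrePoly m) *
              eval x (derivative (derivative (legendrePoly (n + 2)))))
          + b * (∫ x in (-1 : ℝ)..1, eval x (legendrePoly (m + 1)) *
              eval x (derivative (derivative (legendrePoly (n + 2)))))
          + c * (∫ x in (-1 : ℝ)..1, eval x (legendrePoly (m + 2)) *
              eval x (derivative (derivative (legendrePoly (n + 2)))))) := by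
    intro m n a b c d e f
    set A : Polynomial ℝ :=
      C a * legendrePoly m + C b * legendrePoly (m + 1) + C c * legendrePoly (m + 2) with hA
    have h1 : (fun x => (a * P m x + b * P (m + 1) x + c * P (m + 2) x) *
        (d * P'' n x + e * P'' (n + 1) x + f * P'' (n + 2) x))
        = fun x => eval x A *
            (d * eval x (derivative (derivative (legendrePoly n)))
              + e * eval x (derivative (derivative (legendrePoly (n + 1))))
              + f * eval x (derivative (derivative (legendrePoly (n + 2))))) := by
      funext x
      simp only [P, P'', hA, eval_add, eval_mul, eval_C]
    have h2 : ∀ q : Polynomial ℝ, (∫ x in (-1 : ℝ)..1, eval x A * eval x q)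
        = a * (∫ x in (-1 : ℝ)..1, eval x (legendrePoly m) * eval x q)
          + b * (∫ x in (-1 : ℝ)..1, eval x (legendrePoly (m + 1)) * eval x q)
          + c * (∫ x in (-1 : ℝ)..1, eval x (legendrePoly (m + 2)) * eval x q) := by
      intro q
      have hfun : (fun x => eval x A * eval x q)
          = fun x => (a * eval x (legendrePoly m) + b * eval x (legendrePoly (m + 1))
              + c * eval x (legendrePoly (m + 2))) * eval x q := by
        funext x
        simp only [hA, eval_add, eval_mul, eval_C]
      rw [intervalIntegral.integral_congr (fun x _ => congrFun hfun x)]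
      exact split3L a b c _ _ _ q
    rw [intervalIntegral.integral_congr (fun x _ => congrFun h1 x), split3R, h2, h2, h2]
  constructor
  · intro m n hmn
    rw [hpt m n (ξ m) (η m) (θ m) (ξ n) (η n) (θ n),
      ortho2 m n (by omega), ortho2 (m + 1) n (by omega), ortho2 (m + 2) n (by omega),
      ortho2 m (n + 1) (by omega), ortho2 (m + 1) (n + 1) (by omega),
      ortho2 (m + 2) (n + 1) (by omega),
      ortho2 m (n + 2) (by omega), ortho2 (m + 1) (n + 2) (by omega),
      ortho2 (m + 2) (n + 2) (by omega)]
    ring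
  · intro n
    rw [hpt n n (ξ n) (η n) (θ n) (ξ n) (η n) (θ n),
      ortho2 n n (by omega), ortho2 (n + 1) n (by omega), ortho2 (n + 2) n (by omega),
      ortho2 n (n + 1) (by omega), ortho2 (n + 1) (n + 1) (by omega),
      ortho2 (n + 2) (n + 1) (by omega),
      ortho2 (n + 1) (n + 2) (by omega), ortho2 (n + 2) (n + 2) (by omega),
      key_val n]
    ring
end
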